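/- Let A₁, A₂ be Schur stable n×n real matrices and C(α) = αA₁ + (1−α)A₂. Then 1 is not an eigenvalue of C(α) for any α ∈ [0,1] if and only if (I − A₁)(I − A₂)⁻¹ has no negative real eigenvalue. -/

import Mathlib

open Matrix Complex

/-!
Schur stability makes `1 - A₁` and `1 - A₂` invertible. With `M = (1 - A₁)(1 - A₂)⁻¹` one has
`α A₁ + (1 - α) A₂ - 1 = ((α - 1) - α M)(1 - A₂)`, so `C(α)` has eigenvalue `1` exactly when
`(α - 1) / α` is an eigenvalue of `M`, and `α ↦ (α - 1) / α` maps `(0, 1]` onto `(-∞, 0]`.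
-/

variable {m K : Type*} [Fintype m] [DecidableEq m]

def Matrix.IsSchurStable (A : Matrix m m ℝ) : Prop :=
  ∀ lam : ℂ, det (lam • (1 : Matrix m m ℂ) - A.map ofReal) = 0 → ‖lam‖ < 1

theorem Matrix.IsSchurStable.det_one_sub_ne_zero {A : Matrix m m ℝ} (hA : A.IsSchurStable) :
    det (1 - A) ≠ 0 := by
  intro h
  have hmap : ofRealHom.mapMatrix (1 - A) = (1 : ℂ) • (1 : Matrix m m ℂ) - A.map ofReal := by
    rw [map_sub, map_one, one_smul]
    rfl
  have := hA 1 (by rw [← hmap, ← RingHom.map_det, h, map_zero])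
  simp at this

section Field

variable [Field K]

theorem Matrix.convexComb_sub_one_eq_mul {A₁ A₂ M : Matrix m m K} (hM : M * (1 - A₂) = 1 - A₁)
    (α : K) : α • A₁ + (1 - α) • A₂ - 1 = ((α - 1) • 1 - α • M) * (1 - A₂) := by
  rw [Matrix.sub_mul, Matrix.smul_mul, Matrix.smul_mul, hM, Matrix.one_mul]
  module

theorem Matrix.det_sub_smul_eq_zero_iff {α : K} (hα : α ≠ 0) (M : Matrix m m K) :
    det ((α - 1) • 1 - α • M) = 0 ↔ det (((α - 1) / α) • 1 - M) = 0 := by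
  rw [show (α - 1) • (1 : Matrix m m K) - α • M = α • (((α - 1) / α) • 1 - M) by
    rw [smul_sub, smul_smul, mul_div_cancel₀ _ hα], det_smul]
  simp [hα]

end Field

/-- The endpoint `α = 1` corresponds to the eigenvalue `0` of `M`, excluded by `det M ≠ 0`. -/
theorem Matrix.forall_Icc_det_sub_smul_ne_zero_iff [Field K] [LinearOrder K] [IsStrictOrderedRing K]
    {M : Matrix m m K} (hM : det M ≠ 0) :
    (∀ α ∈ Set.Icc (0 : K) 1, det ((α - 1) • 1 - α • M) ≠ 0) ↔
      ¬ ∃ lam : K, lam < 0 ∧ det (lam • 1 - M) = 0 := by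
  constructor
  · rintro hL ⟨lam, hlam, hdet⟩
    have hpos : 0 < 1 - lam := by linarith
    set α := 1 / (1 - lam)
    have hα : 0 < α := by positivity
    have hα1 : α ≤ 1 := by rw [div_le_one hpos]; linarith
    have hlam_eq : (α - 1) / α = lam := by
      simp only [α]
      field_simp [hpos.ne']
      ring
    exact hL α ⟨hα.le, hα1⟩ ((det_sub_smul_eq_zero_iff hα.ne' M).2 (hlam_eq ▸ hdet))
  · rintro hR α ⟨hα0, hα1⟩ hdet
    rcases hα0.eq_or_lt with rfl | hα
    · simp [det_neg] at hdet
    have hlam : (α - 1) / α ≤ 0 := div_nonpos_of_nonpos_of_nonneg (by linarith) hα.le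
    rw [det_sub_smul_eq_zero_iff hα.ne'] at hdet
    rcases hlam.lt_or_eq with hlt | heq
    · exact hR ⟨_, hlt, hdet⟩
    · simp [heq, det_neg, hM] at hdet

theorem cor21_no_eigenvalue_one_iff (n : ℕ) (A₁ A₂ : Matrix (Fin n) (Fin n) ℝ)
    (h₁ : ∀ lam : ℂ, Matrix.det (lam • (1 : Matrix (Fin n) (Fin n) ℂ) - A₁.map Complex.ofReal) = 0 →
      ‖lam‖ < 1)
    (h₂ : ∀ lam : ℂ, Matrix.det (lam • (1 : Matrix (Fin n) (Fin n) ℂ) - A₂.map Complex.ofReal) = 0 →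
      ‖lam‖ < 1) :
    (∀ α ∈ Set.Icc (0 : ℝ) 1,
        Matrix.det ((α • A₁ + (1 - α) • A₂) - 1) ≠ 0) ↔
      ¬ ∃ lam : ℝ, lam < 0 ∧
        Matrix.det (lam • (1 : Matrix (Fin n) (Fin n) ℝ) - (1 - A₁) * (1 - A₂)⁻¹) = 0 := by
  have hd₁ : det (1 - A₁) ≠ 0 := IsSchurStable.det_one_sub_ne_zero h₁
  have hd₂ : det (1 - A₂) ≠ 0 := IsSchurStable.det_one_sub_ne_zero h₂
  set M := (1 - A₁) * (1 - A₂)⁻¹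
  have hM : M * (1 - A₂) = 1 - A₁ := nonsing_inv_mul_cancel_right _ _ (isUnit_iff_ne_zero.2 hd₂)
  have hdetM : det M ≠ 0 := fun h ↦ hd₁ (by rw [← hM, det_mul, h, zero_mul])
  rw [← forall_Icc_det_sub_smul_ne_zero_iff hdetM]
  refine forall₂_congr fun α _ ↦ ?_
  rw [convexComb_sub_one_eq_mul hM, det_mul]
  exact ⟨left_ne_zero_of_mul, (mul_ne_zero · hd₂)⟩
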